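/- Let (X,⊥) be an irredundant orthogonality space of finite rank satisfying conditions (L1) and (R1). Then (X,⊥) satisfies condition (L2), and hence is linear. -/

import Mathlib

variable {X : Type*}

/-- The orthocomplement of a subset of an orthogonality space. -/
def ortho (perp : X → X → Prop) (A : Set X) : Set X := {e | ∀ a ∈ A, perp e a}

/-- A subset is orthoclosed if it coincides with its double orthocomplement. -/
def OrthoClosed (perp : X → X → Prop) (A : Set X) : Prop :=
  ortho perp (ortho perp A) = A

/-- The orthogonality space `(X, perp)` has rank `m`: it contains `m` mutually
orthogonal elements but not `m + 1`. -/
def HasRank (perp : X → X → Prop) (m : ℕ) : Prop :=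
  (∃ D : Finset X, D.card = m ∧ (D : Set X).Pairwise perp) ∧
    ∀ D : Finset X, (D : Set X).Pairwise perp → D.card ≤ m

/-- Irredundance: elements with the same orthocomplement coincide. -/
def Irredundant (perp : X → X → Prop) : Prop :=
  ∀ e f : X, ortho perp {e} = ortho perp {f} → e = f

/-- Condition (L₁). -/
def CondL1 (perp : X → X → Prop) : Prop :=
  ∀ e f : X, f ≠ e → ∃ g : X, perp g e ∧ ortho perp {e, g} = ortho perp {e, f}

/-- Condition (L₂). -/
def CondL2 (perp : X → X → Prop) : Prop :=
  ∀ e g : X, perp g e → ∃ f : X, f ≠ e ∧ f ≠ g ∧ ortho perp {e, g} = ortho perp {e, f}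

/-- The data required by condition (R₁) for a line `L`: a divisible subgroup `C`
of `ℝ/2πℤ` and an injective group homomorphism `κ` from `C` into the automorphism
group of `(X, perp)` such that every `κ t` maps `L` onto itself, the action on `L`
is transitive, and every `κ t` fixes `L^⊥` pointwise. -/
def R1Witness (perp : X → X → Prop) (L : Set X)
    (C : AddSubgroup (AddCircle (2 * Real.pi))) (κ : C → Equiv.Perm X) : Prop :=
  (∀ (c : C) (n : ℕ), n ≠ 0 → ∃ d : C, n • d = c) ∧
  Function.Injective κ ∧
  (∀ s t : C, κ (s + t) = κ s * κ t) ∧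
  (∀ (t : C) (x y : X), perp x y ↔ perp (κ t x) (κ t y)) ∧
  (∀ t : C, ⇑(κ t) '' L = L) ∧
  (∀ g ∈ L, ∀ h ∈ L, ∃ t : C, κ t g = h) ∧
  (∀ t : C, ∀ d ∈ ortho perp L, κ t d = d)

/-- Condition (R₁): every line admits such a family of automorphisms. -/
def CondR1 (perp : X → X → Prop) : Prop :=
  ∀ e f : X, e ≠ f →
    ∃ (C : AddSubgroup (AddCircle (2 * Real.pi))) (κ : C → Equiv.Perm X),
      R1Witness perp (ortho perp (ortho perp {e, f})) C κ

/-!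
Given `e ⊥ g`, the rotation group of (R₁) on the line `{e, g}^⊥⊥` is divisible, so a "half
rotation" `κ_t` with `κ_t (κ_t e) = g` produces a third point `f = κ_t e` of the line.
Applying (L₁) to `e` and `f` yields `h ⊥ e` with `{e, h}^⊥ = {e, f}^⊥ ⊇ {e, g}^⊥`; (L₁) again
turns this into `{g}^⊥ ⊆ {h}^⊥`. Finally (R₁) makes points atomic: an automorphism moving `h`
to `g` and fixing `{g, h}^⊥ = {g}^⊥` pointwise forces `{h}^⊥ ⊆ {g}^⊥`, so `g = h` by
irredundance, and `f` is the point required by (L₂).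
-/

section OrthogonalitySpace

variable {perp : X → X → Prop}

lemma mem_ortho_singleton {z a : X} : z ∈ ortho perp {a} ↔ perp z a := by
  simp [ortho]

lemma mem_ortho_pair {z a b : X} : z ∈ ortho perp {a, b} ↔ perp z a ∧ perp z b := by
  simp [ortho]

lemma subset_ortho_ortho (hsymm : ∀ x y : X, perp x y → perp y x) (A : Set X) :
    A ⊆ ortho perp (ortho perp A) :=
  fun a ha _ hz => hsymm _ _ (hz a ha)

lemma ortho_subset_ortho_of_subset_ortho_ortho (hsymm : ∀ x y : X, perp x y → perp y x)
    {A B : Set X} (h : B ⊆ ortho perp (ortho perp A)) : ortho perp A ⊆ ortho perp B :=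
  fun z hz _ hb => hsymm _ _ (h hb z hz)

lemma ortho_singleton_subset_of_perm (σ : Equiv.Perm X)
    (hσ : ∀ x y : X, perp x y → perp (σ x) (σ y)) {g h : X}
    (hfix : ∀ d ∈ ortho perp {g}, σ d = d) (hσh : σ h = g) :
    ortho perp {h} ⊆ ortho perp {g} := by
  intro z hz
  have hσz : σ z ∈ ortho perp {g} :=
    mem_ortho_singleton.2 (hσh ▸ hσ _ _ (mem_ortho_singleton.1 hz))
  have hσz_eq : σ z = z := σ.injective (hfix _ hσz)
  exact hσz_eq ▸ hσz

lemma eq_of_ortho_singleton_subset (hsymm : ∀ x y : X, perp x y → perp y x)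
    (hirred : Irredundant perp) (hR1 : CondR1 perp) {g h : X}
    (hsub : ortho perp {g} ⊆ ortho perp {h}) : g = h := by
  by_contra hne
  obtain ⟨C, κ, -, -, -, hκ, -, htrans, hfix⟩ := hR1 g h hne
  have hpair : ortho perp {g} ⊆ ortho perp {g, h} := fun z hz =>
    mem_ortho_pair.2 ⟨mem_ortho_singleton.1 hz, mem_ortho_singleton.1 (hsub hz)⟩
  obtain ⟨d, hd⟩ := htrans h (subset_ortho_ortho hsymm _ (by simp))
    g (subset_ortho_ortho hsymm _ (by simp))
  have hrev : ortho perp {h} ⊆ ortho perp {g} :=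
    ortho_singleton_subset_of_perm (κ d) (fun x y => (hκ d x y).1)
      (fun z hz => hfix d z (subset_ortho_ortho hsymm _ (hpair hz))) hd
  exact hne (hirred g h (hsub.antisymm hrev))

lemma ortho_singleton_subset_of_ortho_pair_subset (hsymm : ∀ x y : X, perp x y → perp y x)
    (hL1 : CondL1 perp) {e g h : X} (hge : perp g e) (hhe : perp h e)
    (hsub : ortho perp {e, g} ⊆ ortho perp {e, h}) : ortho perp {g} ⊆ ortho perp {h} := by
  intro z hzg
  rw [mem_ortho_singleton] at hzg ⊢
  by_cases hze : z = e
  · exact hze ▸ hsymm _ _ hhe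
  -- replace `z` by a point `w ⊥ e` spanning the same line with `e`
  obtain ⟨w, hwe, hw⟩ := hL1 e z hze
  have hgw : perp g w :=
    (mem_ortho_pair.1 (hw ▸ mem_ortho_pair.2 ⟨hge, hsymm _ _ hzg⟩ : g ∈ ortho perp {e, w})).2
  have hhw : perp h w :=
    hsymm _ _ (mem_ortho_pair.1 (hsub (mem_ortho_pair.2 ⟨hwe, hsymm _ _ hgw⟩))).2
  exact hsymm _ _
    (mem_ortho_pair.1 (hw ▸ mem_ortho_pair.2 ⟨hhe, hhw⟩ : h ∈ ortho perp {e, z})).2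

lemma R1Witness.exists_mem_ne_ne {L : Set X} {C : AddSubgroup (AddCircle (2 * Real.pi))}
    {κ : C → Equiv.Perm X} (hw : R1Witness perp L C κ) {e g : X} (he : e ∈ L) (hg : g ∈ L)
    (hne : e ≠ g) : ∃ f ∈ L, f ≠ e ∧ f ≠ g := by
  obtain ⟨hdiv, -, hhom, -, himg, htrans, -⟩ := hw
  obtain ⟨s, hs⟩ := htrans e he g hg
  obtain ⟨t, ht⟩ := hdiv s 2 two_ne_zero
  have htt : κ t (κ t e) = g := by
    rw [← Equiv.Perm.mul_apply, ← hhom, ← two_nsmul, ht, hs]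
  refine ⟨κ t e, himg t ▸ Set.mem_image_of_mem _ he, fun hfe => ?_, fun hfg => ?_⟩
  · exact hne (by rw [← htt, hfe, hfe])
  · exact hne (((κ t).injective (htt.trans hfg.symm)).symm.trans hfg)

end OrthogonalitySpace

theorem stmt13_general {X : Type*} (perp : X → X → Prop)
    (hsymm : ∀ x y : X, perp x y → perp y x)
    (hirr : ∀ x : X, ¬ perp x x)
    (hirred : Irredundant perp)
    (hL1 : CondL1 perp)
    (hR1 : CondR1 perp) :
    CondL2 perp := by
  intro e g hge
  have hne : e ≠ g := by rintro rfl; exact hirr e hge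
  obtain ⟨C, κ, hκ⟩ := hR1 e g hne
  have heL := subset_ortho_ortho hsymm {e, g} (by simp : e ∈ ({e, g} : Set X))
  have hgL := subset_ortho_ortho hsymm {e, g} (by simp : g ∈ ({e, g} : Set X))
  obtain ⟨f, hfL, hfe, hfg⟩ := hκ.exists_mem_ne_ne heL hgL hne
  obtain ⟨h, hhe, hh⟩ := hL1 e f hfe
  have hsub : ortho perp {e, g} ⊆ ortho perp {e, h} := hh ▸
    ortho_subset_ortho_of_subset_ortho_ortho hsymm
      (Set.insert_subset heL (Set.singleton_subset_iff.2 hfL))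
  have hgh : g = h := eq_of_ortho_singleton_subset hsymm hirred hR1
    (ortho_singleton_subset_of_ortho_pair_subset hsymm hL1 hge hhe hsub)
  exact ⟨f, hfe, hfg, by rw [hgh, hh]⟩

/-- An irredundant orthogonality space of finite rank
satisfying (L₁) and (R₁) also satisfies (L₂), and hence is linear. -/
theorem stmt13 {X : Type*} [Nonempty X] (perp : X → X → Prop)
    (hsymm : ∀ x y : X, perp x y → perp y x)
    (hirr : ∀ x : X, ¬ perp x x)
    (hirred : Irredundant perp)
    (hrank : ∃ m : ℕ, 0 < m ∧ HasRank perp m)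
    (hL1 : CondL1 perp)
    (hR1 : CondR1 perp) :
    CondL2 perp :=
  stmt13_general perp hsymm hirr hirred hL1 hR1
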